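/- arXiv:2112.04191 — 2 statements merged into one kernel-verified Lean document; each statement's English description precedes it below -/
import Mathlib

section
/- Error estimate for the transition map: under the hypotheses that Φ, Ψ : ℂ → ℂ are real-differentiable at z₀ with J_Ψ(z₀) > 0 and Φ_z(z₀) ≠ 0, that Ψ has a local inverse Ψ⁻¹ real-differentiable at Ψ(z₀) with fderiv ℝ Ψ⁻¹ (Ψ(z₀)) equal to the inverse of fderiv ℝ Ψ z₀, that the chain rule fderiv ℝ (Φ∘Ψ⁻¹) (Ψ(z₀)) = (fderiv ℝ Φ z₀) ∘ (fderiv ℝ Ψ⁻¹ (Ψ(z₀))) holds, and that |μ_Ψ(z₀)|·|μ_Φ(z₀)| < 1, the Beltrami coefficient of Φ∘Ψ⁻¹ at Ψ(z₀) satisfies |μ_{Φ∘Ψ⁻¹}(Ψ(z₀))| ≤ |μ_Φ(z₀) − μ_Ψ(z₀)| / (1 − |μ_Ψ(z₀)|·|μ_Φ(z₀)|). In particular, when μ_Φ(z₀) and μ_Ψ(z₀) are close, the transition map Φ∘Ψ⁻¹ is close to conformal at Ψ(z₀). -/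
/-- The Wirtinger derivative `f_z` of `f : ℂ → ℂ` at `z`. -/
noncomputable def wirtingerDz (f : ℂ → ℂ) (z : ℂ) : ℂ :=
  (1 / 2) * (fderiv ℝ f z 1 - Complex.I * fderiv ℝ f z Complex.I)

/-- The conjugate Wirtinger derivative `f_z̄` of `f : ℂ → ℂ` at `z`. -/
noncomputable def wirtingerDzbar (f : ℂ → ℂ) (z : ℂ) : ℂ :=
  (1 / 2) * (fderiv ℝ f z 1 + Complex.I * fderiv ℝ f z Complex.I)

/-- The Beltrami coefficient `μ_f(z) = f_z̄ / f_z` of `f` at `z`. -/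
noncomputable def beltrami (f : ℂ → ℂ) (z : ℂ) : ℂ :=
  wirtingerDzbar f z / wirtingerDz f z

/-- The Jacobian determinant of `f : ℂ → ℂ` at `z`. -/
noncomputable def jacobianDet (f : ℂ → ℂ) (z : ℂ) : ℝ :=
  LinearMap.det ((fderiv ℝ f z) : ℂ →ₗ[ℝ] ℂ)

/-!
Every `ℝ`-linear map of `ℂ` is `v ↦ a v + b v̄` with `a = L_z`, `b = L_z̄`, and composition acts on
these coefficients by `(N ∘ L)_z = N_z a + N_z̄ b̄`, `(N ∘ L)_z̄ = N_z b + N_z̄ ā`. Writing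
`K = N ∘ L` (here `K = DΦ`, `L = DΨ`, `N = D(Φ ∘ Ψ⁻¹)`) and `D = |a|² - |b|² = det L > 0`, this gives
`K_z̄ - μ_L K_z = N_z̄ D / a` and `K_z - μ̄_L K_z̄ = N_z D / ā`, so after dividing by `K_z`
`μ_N = (μ_K - μ_L) / (1 - μ_K μ̄_L) · a / ā`.
The estimate follows from `|1 - μ_K μ̄_L| ≥ 1 - |μ_L| |μ_K|`.
-/

open Complex ComplexConjugate

namespace ContinuousLinearMap

noncomputable def dz (L : ℂ →L[ℝ] ℂ) : ℂ := (1 / 2) * (L 1 - I * L I)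

noncomputable def dzbar (L : ℂ →L[ℝ] ℂ) : ℂ := (1 / 2) * (L 1 + I * L I)

noncomputable def beltramiCoeff (L : ℂ →L[ℝ] ℂ) : ℂ := L.dzbar / L.dz

theorem apply_eq_dz_mul_add_dzbar_mul_conj (L : ℂ →L[ℝ] ℂ) (v : ℂ) :
    L v = L.dz * v + L.dzbar * conj v := by
  have hv : L v = v.re * L 1 + v.im * L I := by
    conv_lhs => rw [← re_add_im v, ← real_smul, ← mul_one (v.re : ℂ), ← real_smul, map_add,
      map_smul, map_smul, real_smul, real_smul]
  conv_rhs => rw [← re_add_im v]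
  rw [hv, dz, dzbar]
  simp only [map_add, map_mul, conj_ofReal, conj_I]
  linear_combination (v.im : ℂ) * L I * I_sq

theorem dz_comp (N L : ℂ →L[ℝ] ℂ) : (N.comp L).dz = N.dz * L.dz + N.dzbar * conj L.dzbar := by
  rw [dz, comp_apply, comp_apply, apply_eq_dz_mul_add_dzbar_mul_conj N (L 1),
    apply_eq_dz_mul_add_dzbar_mul_conj N (L I), apply_eq_dz_mul_add_dzbar_mul_conj L 1,
    apply_eq_dz_mul_add_dzbar_mul_conj L I]
  simp only [map_add, map_mul, map_one, map_neg, conj_I, neg_neg, mul_one]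
  linear_combination
    (1 / 2 : ℂ) * (N.dzbar * (conj L.dz - conj L.dzbar) - N.dz * (L.dz - L.dzbar)) * I_sq

theorem dzbar_comp (N L : ℂ →L[ℝ] ℂ) :
    (N.comp L).dzbar = N.dz * L.dzbar + N.dzbar * conj L.dz := by
  rw [dzbar, comp_apply, comp_apply, apply_eq_dz_mul_add_dzbar_mul_conj N (L 1),
    apply_eq_dz_mul_add_dzbar_mul_conj N (L I), apply_eq_dz_mul_add_dzbar_mul_conj L 1,
    apply_eq_dz_mul_add_dzbar_mul_conj L I]
  simp only [map_add, map_mul, map_one, map_neg, conj_I, neg_neg, mul_one]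
  linear_combination
    (1 / 2 : ℂ) * (N.dz * (L.dz - L.dzbar) - N.dzbar * (conj L.dz - conj L.dzbar)) * I_sq

theorem det_eq_normSq_dz_sub_normSq_dzbar (L : ℂ →L[ℝ] ℂ) :
    LinearMap.det (L : ℂ →ₗ[ℝ] ℂ) = normSq L.dz - normSq L.dzbar := by
  rw [← LinearMap.det_toMatrix basisOneI, Matrix.det_fin_two]
  simp only [LinearMap.toMatrix_apply, coe_basisOneI, Matrix.cons_val_zero, Matrix.cons_val_one,
    coe_coe, coe_basisOneI_repr, dz, dzbar, normSq_apply, one_div, mul_re, mul_im, inv_re, inv_im,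
    re_ofNat, im_ofNat, div_self_mul_self', sub_re, sub_im, add_re, add_im, I_re, I_im,
    zero_mul, one_mul, zero_sub, sub_neg_eq_add, neg_zero, zero_div, zero_add, sub_zero, add_zero]
  ring

theorem dz_ne_zero_of_det_pos {L : ℂ →L[ℝ] ℂ} (hL : 0 < LinearMap.det (L : ℂ →ₗ[ℝ] ℂ)) :
    L.dz ≠ 0 := by
  intro h
  rw [det_eq_normSq_dz_sub_normSq_dzbar, h, map_zero] at hL
  linarith [normSq_nonneg L.dzbar]

theorem beltramiCoeff_eq_of_comp {N L : ℂ →L[ℝ] ℂ} (hL : 0 < LinearMap.det (L : ℂ →ₗ[ℝ] ℂ))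
    (hK : (N.comp L).dz ≠ 0) :
    N.beltramiCoeff = ((N.comp L).beltramiCoeff - L.beltramiCoeff) /
      (1 - (N.comp L).beltramiCoeff * conj L.beltramiCoeff) * (L.dz / conj L.dz) := by
  set K := N.comp L
  set a := L.dz
  set b := L.dzbar
  set D : ℝ := normSq a - normSq b
  have hD : (D : ℂ) ≠ 0 := ofReal_ne_zero.mpr (det_eq_normSq_dz_sub_normSq_dzbar L ▸ hL).ne'
  have ha : a ≠ 0 := dz_ne_zero_of_det_pos hL
  have hca : conj a ≠ 0 := (map_ne_zero _).mpr ha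
  have hD' : a * conj a - b * conj b = D := by simp only [D, mul_conj, ofReal_sub]
  have hnum : K.beltramiCoeff - L.beltramiCoeff = N.dzbar * D / (K.dz * a) := by
    rw [beltramiCoeff, beltramiCoeff, dzbar_comp, ← hD', div_sub_div _ _ hK ha, dz_comp]
    ring
  have hden : 1 - K.beltramiCoeff * conj L.beltramiCoeff = N.dz * D / (K.dz * conj a) := by
    rw [beltramiCoeff, beltramiCoeff, map_div₀, div_mul_div_comm, one_sub_div (mul_ne_zero hK hca),
      dzbar_comp, ← hD']
    simp only [K, dz_comp]
    ring
  rw [hnum, hden]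
  rcases eq_or_ne N.dz 0 with hN | hN
  · -- both sides are junk `x / 0 = 0`
    simp [beltramiCoeff, hN]
  · rw [beltramiCoeff]
    field_simp

theorem norm_beltramiCoeff_eq_of_comp {N L : ℂ →L[ℝ] ℂ}
    (hL : 0 < LinearMap.det (L : ℂ →ₗ[ℝ] ℂ)) (hK : (N.comp L).dz ≠ 0) :
    ‖N.beltramiCoeff‖ = ‖(N.comp L).beltramiCoeff - L.beltramiCoeff‖ /
      ‖1 - (N.comp L).beltramiCoeff * conj L.beltramiCoeff‖ := by
  rw [beltramiCoeff_eq_of_comp hL hK, norm_mul, norm_div L.dz, norm_conj,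
    div_self (norm_ne_zero_iff.mpr (dz_ne_zero_of_det_pos hL)), mul_one, norm_div]

end ContinuousLinearMap

theorem norm_sub_div_one_sub_mul_conj_le {μ ν : ℂ} (h : ‖ν‖ * ‖μ‖ < 1) :
    ‖μ - ν‖ / ‖1 - μ * conj ν‖ ≤ ‖μ - ν‖ / (1 - ‖ν‖ * ‖μ‖) := by
  refine div_le_div_of_nonneg_left (norm_nonneg _) (by linarith) ?_
  calc 1 - ‖ν‖ * ‖μ‖ = ‖(1 : ℂ)‖ - ‖μ * conj ν‖ := by rw [norm_one, norm_mul, norm_conj, mul_comm]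
    _ ≤ ‖1 - μ * conj ν‖ := norm_sub_norm_le _ _

theorem beltrami_transition_estimate_general (Φ Ψ Ψinv : ℂ → ℂ) (z₀ : ℂ)
    (hJ : 0 < jacobianDet Ψ z₀) (hΦz : wirtingerDz Φ z₀ ≠ 0)
    (hleft : (fderiv ℝ Ψinv (Ψ z₀)).comp (fderiv ℝ Ψ z₀) = ContinuousLinearMap.id ℝ ℂ)
    (hchain : fderiv ℝ (Φ ∘ Ψinv) (Ψ z₀) =
      (fderiv ℝ Φ z₀).comp (fderiv ℝ Ψinv (Ψ z₀)))
    (hsmall : ‖beltrami Ψ z₀‖ * ‖beltrami Φ z₀‖ < 1) :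
    ‖beltrami (Φ ∘ Ψinv) (Ψ z₀)‖ ≤
      ‖beltrami Φ z₀ - beltrami Ψ z₀‖ /
        (1 - ‖beltrami Ψ z₀‖ * ‖beltrami Φ z₀‖) := by
  have hcomp : (fderiv ℝ (Φ ∘ Ψinv) (Ψ z₀)).comp (fderiv ℝ Ψ z₀) = fderiv ℝ Φ z₀ := by
    rw [hchain, ContinuousLinearMap.comp_assoc, hleft, ContinuousLinearMap.comp_id]
  have hμ := ContinuousLinearMap.norm_beltramiCoeff_eq_of_comp
    (N := fderiv ℝ (Φ ∘ Ψinv) (Ψ z₀)) hJ (hcomp ▸ hΦz)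
  rw [hcomp] at hμ
  exact hμ.trans_le (norm_sub_div_one_sub_mul_conj_le hsmall)

/-- Error estimate for the transition map `Φ ∘ Ψ⁻¹`: under the stated differentiability,
invertibility and chain-rule hypotheses, and provided `|μ_Ψ(z₀)|·|μ_Φ(z₀)| < 1`, one has
`|μ_{Φ∘Ψ⁻¹}(Ψ(z₀))| ≤ |μ_Φ(z₀) − μ_Ψ(z₀)| / (1 − |μ_Ψ(z₀)|·|μ_Φ(z₀)|)`. -/
theorem beltrami_transition_estimate (Φ Ψ Ψinv : ℂ → ℂ) (z₀ : ℂ)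
    (hΦ : DifferentiableAt ℝ Φ z₀) (hΨ : DifferentiableAt ℝ Ψ z₀)
    (hJ : 0 < jacobianDet Ψ z₀) (hΦz : wirtingerDz Φ z₀ ≠ 0)
    (hinv : DifferentiableAt ℝ Ψinv (Ψ z₀))
    (hleft : (fderiv ℝ Ψinv (Ψ z₀)).comp (fderiv ℝ Ψ z₀) = ContinuousLinearMap.id ℝ ℂ)
    (hright : (fderiv ℝ Ψ z₀).comp (fderiv ℝ Ψinv (Ψ z₀)) = ContinuousLinearMap.id ℝ ℂ)
    (hchain : fderiv ℝ (Φ ∘ Ψinv) (Ψ z₀) =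
      (fderiv ℝ Φ z₀).comp (fderiv ℝ Ψinv (Ψ z₀)))
    (hsmall : ‖beltrami Ψ z₀‖ * ‖beltrami Φ z₀‖ < 1) :
    ‖beltrami (Φ ∘ Ψinv) (Ψ z₀)‖ ≤
      ‖beltrami Φ z₀ - beltrami Ψ z₀‖ /
        (1 - ‖beltrami Ψ z₀‖ * ‖beltrami Φ z₀‖) :=
  beltrami_transition_estimate_general Φ Ψ Ψinv z₀ hJ hΦz hleft hchain hsmall
end

section
/- Vanishing of the least-squares quasi-conformal energy density characterizes the Beltrami equation: let f : ℂ → ℂ be real-differentiable at z, write f = u + iv with u, v real-valued, ∇u = (u_x, u_y), ∇v = (v_x, v_y) where L(1) = (u_x, v_x) and L(i) = (u_y, v_y) for L = fderiv ℝ f z. Let μ ∈ ℂ with |μ| < 1, P = P(μ), and J = [[0, −1], [1, 0]]. Then f satisfies the Beltrami equation f_z̄ = μ·f_z at z if and only if P·∇u + J·P·∇v = 0. -/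
/-- The gradient `∇u = (u_x, u_y)` of the real part `u` of `f = u + iv`, computed from
`L = fderiv ℝ f z` via `L(1) = (u_x, v_x)` and `L(i) = (u_y, v_y)`. -/
noncomputable def gradRe (f : ℂ → ℂ) (z : ℂ) : Fin 2 → ℝ :=
  ![(fderiv ℝ f z 1).re, (fderiv ℝ f z Complex.I).re]

/-- The gradient `∇v = (v_x, v_y)` of the imaginary part `v` of `f = u + iv`. -/
noncomputable def gradIm (f : ℂ → ℂ) (z : ℂ) : Fin 2 → ℝ :=
  ![(fderiv ℝ f z 1).im, (fderiv ℝ f z Complex.I).im]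

/-- The matrix `P(μ)` associated with a Beltrami coefficient `μ = ρ + iτ`. -/
noncomputable def Pmat (μ : ℂ) : Matrix (Fin 2) (Fin 2) ℝ :=
  (1 / Real.sqrt (1 - ‖μ‖ ^ 2)) •
    !![1 - μ.re, -μ.im; -μ.im, 1 + μ.re]

/-- The matrix `J = [[0, −1], [1, 0]]`. -/
def Jmat : Matrix (Fin 2) (Fin 2) ℝ := !![0, -1; 1, 0]

open Complex Matrix

theorem Pmat_mulVec_add_Jmat_mulVec (μ p q : ℂ) :
    Pmat μ *ᵥ ![p.re, q.re] + Jmat *ᵥ (Pmat μ *ᵥ ![p.im, q.im]) =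
      (1 / Real.sqrt (1 - ‖μ‖ ^ 2)) •
        ![(p + I * q - μ * (p - I * q)).re, (p + I * q - μ * (p - I * q)).im] := by
  ext i
  fin_cases i <;>
    simp [Pmat, Jmat, dotProduct, Fin.sum_univ_two] <;> ring

theorem vecCons_re_im_eq_zero_iff (w : ℂ) : ![w.re, w.im] = 0 ↔ w = 0 := by
  simp [funext_iff, Fin.forall_fin_two, Complex.ext_iff]

theorem wirtingerDzbar_eq_mul_wirtingerDz_iff (f : ℂ → ℂ) (z μ : ℂ) :
    wirtingerDzbar f z = μ * wirtingerDz f z ↔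
      fderiv ℝ f z 1 + I * fderiv ℝ f z I - μ * (fderiv ℝ f z 1 - I * fderiv ℝ f z I) = 0 := by
  have hres : wirtingerDzbar f z - μ * wirtingerDz f z =
      (1 / 2) * (fderiv ℝ f z 1 + I * fderiv ℝ f z I
        - μ * (fderiv ℝ f z 1 - I * fderiv ℝ f z I)) := by
    simp only [wirtingerDzbar, wirtingerDz]
    ring
  rw [← sub_eq_zero, hres, mul_eq_zero, or_iff_right (by norm_num)]

theorem beltrami_eq_iff_energy_density_zero_general (f : ℂ → ℂ) (z : ℂ)
    (μ : ℂ) (hμ : ‖μ‖ < 1) :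
    wirtingerDzbar f z = μ * wirtingerDz f z ↔
      (Pmat μ).mulVec (gradRe f z) + Jmat.mulVec ((Pmat μ).mulVec (gradIm f z)) = 0 := by
  have hscale : 1 / Real.sqrt (1 - ‖μ‖ ^ 2) ≠ 0 := by
    have : 0 < 1 - ‖μ‖ ^ 2 := by nlinarith [norm_nonneg μ]
    positivity
  rw [wirtingerDzbar_eq_mul_wirtingerDz_iff, gradRe, gradIm, Pmat_mulVec_add_Jmat_mulVec,
    smul_eq_zero, or_iff_right hscale, vecCons_re_im_eq_zero_iff]

/-- Vanishing of the least-squares quasi-conformal energy density characterizes the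
Beltrami equation: for `f : ℂ → ℂ` real-differentiable at `z`, written `f = u + iv`,
and `μ ∈ ℂ` with `|μ| < 1`, the Beltrami equation `f_z̄ = μ·f_z` holds at `z` if and
only if `P(μ)·∇u + J·P(μ)·∇v = 0`. -/
theorem beltrami_eq_iff_energy_density_zero (f : ℂ → ℂ) (z : ℂ)
    (hf : DifferentiableAt ℝ f z) (μ : ℂ) (hμ : ‖μ‖ < 1) :
    wirtingerDzbar f z = μ * wirtingerDz f z ↔
      (Pmat μ).mulVec (gradRe f z) + Jmat.mulVec ((Pmat μ).mulVec (gradIm f z)) = 0 :=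
  beltrami_eq_iff_energy_density_zero_general f z μ hμ
end
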